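/- arXiv:1604.02827 — 6 statements merged into one kernel-verified Lean document; each statement's English description precedes it below -/
import Mathlib

section
/- Let a, b, c : I → ℝ be differentiable functions on an open interval I satisfying b' − a' = a² − b² and c' − a' = a² − c², with a, b, c pairwise distinct at every point, and let P := a² + b² + c² − ab − bc − ac be nowhere zero. Define α² = (a−b)⁴/(4P) for a differentiable function α satisfying α' = −α(a + b − c). Then at every point of I, 6abc = a²b + ab² + a²c + ac² + b²c + bc². -/
/-!
Multiplying out `α² = (a-b)⁴/(4P)` gives `α² · 4P = (a-b)⁴` on the whole interval, so the two
sides have the same derivative. Using `α' = -α(a+b-c)`, `(a-b)' = b² - a²` and the ODE expressions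
for `b'`, `c'`, and dividing by `α² ≠ 0`, this becomes `P' = -2(a+b+c)P`, which expands to
`a²b + ab² + a²c + ac² + b²c + bc² - 6abc = 0`.
-/

open Filter Topology

def quadP (x y z : ℝ) : ℝ := x ^ 2 + y ^ 2 + z ^ 2 - x * y - y * z - x * z

theorem HasDerivAt.quadP {a b c : ℝ → ℝ} {a' b' c' s : ℝ} (ha : HasDerivAt a a' s)
    (hb : HasDerivAt b b' s) (hc : HasDerivAt c c' s) :
    HasDerivAt (fun t => _root_.quadP (a t) (b t) (c t))
      ((2 * a s - b s - c s) * a' + (2 * b s - a s - c s) * b' + (2 * c s - a s - b s) * c') s :=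
  ((((((ha.pow 2).add (hb.pow 2)).add (hc.pow 2)).sub (ha.mul hb)).sub
    (hb.mul hc)).sub (ha.mul hc)).congr_deriv (by push_cast; ring)

theorem quadP_deriv_eq_of_ode {x y z α x' y' z' α' : ℝ} (hxy : x ≠ y)
    (hy' : y' - x' = x ^ 2 - y ^ 2) (hz' : z' - x' = x ^ 2 - z ^ 2)
    (hα' : α' = -α * (x + y - z)) (hαsq : α ^ 2 * (4 * quadP x y z) = (x - y) ^ 4)
    (hderiv : 2 * α * α' * (4 * quadP x y z) +
        α ^ 2 * (4 * ((2 * x - y - z) * x' + (2 * y - x - z) * y' + (2 * z - x - y) * z')) =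
      4 * (x - y) ^ 3 * (x' - y')) :
    (2 * y - x - z) * (x ^ 2 - y ^ 2) + (2 * z - x - y) * (x ^ 2 - z ^ 2) =
      -2 * (x + y + z) * quadP x y z := by
  have hα : α ≠ 0 := by
    rintro rfl
    exact pow_ne_zero 4 (sub_ne_zero.mpr hxy) (by simpa using hαsq.symm)
  have key : 4 * α ^ 2 * ((2 * y - x - z) * (x ^ 2 - y ^ 2) + (2 * z - x - y) * (x ^ 2 - z ^ 2) +
      2 * (x + y + z) * quadP x y z) = 0 := by
    subst hα'
    linear_combination hderiv + 4 * (x + y) * hαsq -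
      (4 * α ^ 2 * (2 * y - x - z) + 4 * (x - y) ^ 3) * hy' - 4 * α ^ 2 * (2 * z - x - y) * hz'
  have : (4 : ℝ) * α ^ 2 ≠ 0 := by positivity
  linear_combination (mul_eq_zero.mp key).resolve_left this

theorem six_mul_eq_of_quadP_deriv_eq {x y z : ℝ}
    (h : (2 * y - x - z) * (x ^ 2 - y ^ 2) + (2 * z - x - y) * (x ^ 2 - z ^ 2) =
      -2 * (x + y + z) * quadP x y z) :
    6 * (x * y * z) = x ^ 2 * y + x * y ^ 2 + x ^ 2 * z + x * z ^ 2 + y ^ 2 * z + y * z ^ 2 := by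
  unfold quadP at h
  linear_combination -h

theorem stmt_2_general (A B : ℝ) (a b c α : ℝ → ℝ)
    (ha : DifferentiableOn ℝ a (Set.Ioo A B)) (hb : DifferentiableOn ℝ b (Set.Ioo A B))
    (hc : DifferentiableOn ℝ c (Set.Ioo A B)) (hα : DifferentiableOn ℝ α (Set.Ioo A B))
    (hode1 : ∀ s ∈ Set.Ioo A B, deriv b s - deriv a s = (a s) ^ 2 - (b s) ^ 2)
    (hode2 : ∀ s ∈ Set.Ioo A B, deriv c s - deriv a s = (a s) ^ 2 - (c s) ^ 2)
    (hdist : ∀ s ∈ Set.Ioo A B, a s ≠ b s ∧ b s ≠ c s ∧ a s ≠ c s)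
    (hP : ∀ s ∈ Set.Ioo A B,
      (a s) ^ 2 + (b s) ^ 2 + (c s) ^ 2 - a s * b s - b s * c s - a s * c s ≠ 0)
    (hαsq : ∀ s ∈ Set.Ioo A B, (α s) ^ 2 = (a s - b s) ^ 4 /
      (4 * ((a s) ^ 2 + (b s) ^ 2 + (c s) ^ 2 - a s * b s - b s * c s - a s * c s)))
    (hα' : ∀ s ∈ Set.Ioo A B, deriv α s = - α s * (a s + b s - c s)) :
    ∀ s ∈ Set.Ioo A B,
      6 * (a s * b s * c s) =
        (a s) ^ 2 * b s + a s * (b s) ^ 2 + (a s) ^ 2 * c s + a s * (c s) ^ 2 +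
          (b s) ^ 2 * c s + b s * (c s) ^ 2 := by
  have hαsq' : ∀ t ∈ Set.Ioo A B, α t ^ 2 * (4 * quadP (a t) (b t) (c t)) = (a t - b t) ^ 4 :=
    fun t ht => (eq_div_iff (mul_ne_zero four_ne_zero (hP t ht))).mp (hαsq t ht)
  intro s hs
  have hmem : Set.Ioo A B ∈ 𝓝 s := isOpen_Ioo.mem_nhds hs
  have Ha := (ha.differentiableAt hmem).hasDerivAt
  have Hb := (hb.differentiableAt hmem).hasDerivAt
  have Hc := (hc.differentiableAt hmem).hasDerivAt
  have Hα := (hα.differentiableAt hmem).hasDerivAt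
  have hderiv := (((Hα.pow 2).mul ((Ha.quadP Hb Hc).const_mul 4)).congr_of_eventuallyEq
    (eventuallyEq_of_mem hmem hαsq').symm).unique ((Ha.sub Hb).pow 4)
  simp only [Pi.pow_apply, Pi.sub_apply, Nat.cast_ofNat] at hderiv
  exact six_mul_eq_of_quadP_deriv_eq <| quadP_deriv_eq_of_ode (hdist s hs).1 (hode1 s hs)
    (hode2 s hs) (hα' s hs) (hαsq' s hs) (by linear_combination hderiv)

/-- Key ODE computation in the proof of Proposition 3.4. -/
theorem stmt_2 (A B : ℝ) (a b c α : ℝ → ℝ)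
    (ha : DifferentiableOn ℝ a (Set.Ioo A B)) (hb : DifferentiableOn ℝ b (Set.Ioo A B))
    (hc : DifferentiableOn ℝ c (Set.Ioo A B)) (hα : DifferentiableOn ℝ α (Set.Ioo A B))
    (hode1 : ∀ s ∈ Set.Ioo A B, deriv b s - deriv a s = (a s) ^ 2 - (b s) ^ 2)
    (hode2 : ∀ s ∈ Set.Ioo A B, deriv c s - deriv a s = (a s) ^ 2 - (c s) ^ 2)
    (hdist : ∀ s ∈ Set.Ioo A B, a s ≠ b s ∧ b s ≠ c s ∧ a s ≠ c s)
    (hP : ∀ s ∈ Set.Ioo A B,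
      (a s) ^ 2 + (b s) ^ 2 + (c s) ^ 2 - a s * b s - b s * c s - a s * c s ≠ 0)
    (hαsq : ∀ s ∈ Set.Ioo A B, (α s) ^ 2 = (a s - b s) ^ 4 /
      (4 * ((a s) ^ 2 + (b s) ^ 2 + (c s) ^ 2 - a s * b s - b s * c s - a s * c s)))
    (hα0 : ∀ s ∈ Set.Ioo A B, α s ≠ 0)
    (hα' : ∀ s ∈ Set.Ioo A B, deriv α s = - α s * (a s + b s - c s)) :
    ∀ s ∈ Set.Ioo A B,
      6 * (a s * b s * c s) =
        (a s) ^ 2 * b s + a s * (b s) ^ 2 + (a s) ^ 2 * c s + a s * (c s) ^ 2 +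
          (b s) ^ 2 * c s + b s * (c s) ^ 2 :=
  stmt_2_general A B a b c α ha hb hc hα hode1 hode2 hdist hP hαsq hα'
end

section
/- Let p, h, f : I → ℝ be smooth functions on an open interval with p, h > 0, set a := p'/p and b := h'/h, and suppose a = 0 identically on I while b' + b² = 0 and b is nowhere zero. If moreover f'·a = a' + a² + 2ab + λ and f'·b = b' + 2b² + ab − k/h² + λ and f'' = 3a' + 3a² + λ hold on I for constants λ, k, then f' = 0 identically on I (and k > 0). -/
lemma my_const_of_deriv_zero {A B : ℝ} {g : ℝ → ℝ}
    (hg : DifferentiableOn ℝ g (Set.Ioo A B))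
    (hg' : ∀ s ∈ Set.Ioo A B, deriv g s = 0)
    {x y : ℝ} (hx : x ∈ Set.Ioo A B) (hy : y ∈ Set.Ioo A B) : g x = g y := by
  apply (convex_Ioo A B).is_const_of_fderivWithin_eq_zero hg _ hx hy
  intro z hz
  rw [fderivWithin_of_isOpen isOpen_Ioo hz]
  have hd : DifferentiableAt ℝ g z := (hg z hz).differentiableAt (isOpen_Ioo.mem_nhds hz)
  have h0 : HasDerivAt g 0 z := by
    have := hd.hasDerivAt
    rwa [hg' z hz] at this
  rw [h0.hasFDerivAt.fderiv]
  ext; simp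

/-- Lemma 5.2 (the case a = 0): the soliton equations for the warped metric
g = ds² + p² dt² + h² g̃ force f' ≡ 0 (and k > 0) when a = p'/p vanishes identically. -/
theorem stmt_3 (A B lam k : ℝ) (hAB : A < B) (p h f a b : ℝ → ℝ)
    (hp : ContDiffOn ℝ (⊤ : ℕ∞) p (Set.Ioo A B)) (hh : ContDiffOn ℝ (⊤ : ℕ∞) h (Set.Ioo A B))
    (hf : ContDiffOn ℝ (⊤ : ℕ∞) f (Set.Ioo A B))
    (hppos : ∀ s ∈ Set.Ioo A B, 0 < p s) (hhpos : ∀ s ∈ Set.Ioo A B, 0 < h s)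
    (hadef : ∀ s ∈ Set.Ioo A B, a s = deriv p s / p s)
    (hbdef : ∀ s ∈ Set.Ioo A B, b s = deriv h s / h s)
    (ha0 : ∀ s ∈ Set.Ioo A B, a s = 0)
    (hbode : ∀ s ∈ Set.Ioo A B, deriv b s + (b s) ^ 2 = 0)
    (hbne : ∀ s ∈ Set.Ioo A B, b s ≠ 0)
    (heq2 : ∀ s ∈ Set.Ioo A B,
      deriv f s * a s = deriv a s + (a s) ^ 2 + 2 * a s * b s + lam)
    (heq3 : ∀ s ∈ Set.Ioo A B, deriv f s * b s =
      deriv b s + 2 * (b s) ^ 2 + a s * b s - k / (h s) ^ 2 + lam)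
    (heq1 : ∀ s ∈ Set.Ioo A B,
      deriv (deriv f) s = 3 * deriv a s + 3 * (a s) ^ 2 + lam) :
    (∀ s ∈ Set.Ioo A B, deriv f s = 0) ∧ 0 < k := by
  set I := Set.Ioo A B with hI
  have hIopen : IsOpen I := isOpen_Ioo
  -- two sample points
  have hs0 : (A + B) / 2 ∈ I := by
    simp only [hI, Set.mem_Ioo]; constructor <;> linarith
  have hs1 : (A + 3 * B) / 4 ∈ I := by
    simp only [hI, Set.mem_Ioo]; constructor <;> linarith
  set s0 := (A + B) / 2
  set s1 := (A + 3 * B) / 4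
  have hs01 : s0 ≠ s1 := by simp only [s0, s1]; intro hc; nlinarith [hAB]
  -- deriv a = 0 on I
  have hda : ∀ s ∈ I, deriv a s = 0 := by
    intro s hs
    have hev : a =ᶠ[nhds s] (fun _ => 0) :=
      Filter.eventuallyEq_of_mem (hIopen.mem_nhds hs) ha0
    rw [hev.deriv_eq, deriv_const]
  -- lam = 0
  have hlam : lam = 0 := by
    have := heq2 s0 hs0
    rw [ha0 s0 hs0, hda s0 hs0] at this
    linarith
  -- differentiability facts
  have hh' : ContDiffOn ℝ (⊤ : ℕ∞) (deriv h) I := hh.deriv_of_isOpen hIopen (by simp)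
  have hf' : ContDiffOn ℝ (⊤ : ℕ∞) (deriv f) I := hf.deriv_of_isOpen hIopen (by simp)
  -- h'' = 0 on I
  have hddh : ∀ s ∈ I, deriv (deriv h) s = 0 := by
    intro s hs
    have hhd : DifferentiableAt ℝ h s :=
      (hh.differentiableOn (by simp) s hs).differentiableAt (hIopen.mem_nhds hs)
    have hhd' : DifferentiableAt ℝ (deriv h) s :=
      (hh'.differentiableOn (by simp) s hs).differentiableAt (hIopen.mem_nhds hs)
    have hhne : h s ≠ 0 := (hhpos s hs).ne'
    have hev : b =ᶠ[nhds s] (fun t => deriv h t / h t) :=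
      Filter.eventuallyEq_of_mem (hIopen.mem_nhds hs) hbdef
    have hdb : deriv b s = (deriv (deriv h) s * h s - deriv h s * deriv h s) / (h s) ^ 2 := by
      rw [hev.deriv_eq, deriv_fun_div hhd' hhd hhne]
    have hode := hbode s hs
    rw [hdb, hbdef s hs] at hode
    have hs2 : (h s) ^ 2 ≠ 0 := pow_ne_zero 2 hhne
    field_simp at hode
    -- hode : deriv (deriv h) s * h s - ... = 0 roughly
    nlinarith [hode, sq_nonneg (h s), hhpos s hs]
  -- deriv h is constant on I
  set α := deriv h s0 with hα
  have hconsth' : ∀ s ∈ I, deriv h s = α :=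
    fun s hs => my_const_of_deriv_zero (hh'.differentiableOn (by simp)) hddh hs hs0
  have hαne : α ≠ 0 := by
    have := hbne s0 hs0
    rw [hbdef s0 hs0] at this
    intro hc; rw [hα] at hc; rw [hc] at this; simp at this
  -- f'' = 0 on I, hence deriv f constant
  have hddf : ∀ s ∈ I, deriv (deriv f) s = 0 := by
    intro s hs
    rw [heq1 s hs, hda s hs, ha0 s hs, hlam]; ring
  set c := deriv f s0 with hc
  have hconstf' : ∀ s ∈ I, deriv f s = c :=
    fun s hs => my_const_of_deriv_zero (hf'.differentiableOn (by simp)) hddf hs hs0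
  -- key equation : c * α * h s = α ^ 2 - k  on I
  have hkey : ∀ s ∈ I, c * α * h s = α ^ 2 - k := by
    intro s hs
    have h3 := heq3 s hs
    have hdbs : deriv b s = -(b s) ^ 2 := by linarith [hbode s hs]
    rw [hconstf' s hs, ha0 s hs, hdbs, hlam, hbdef s hs, hconsth' s hs] at h3
    have hhne : h s ≠ 0 := (hhpos s hs).ne'
    field_simp at h3
    nlinarith [h3, pow_pos (hhpos s hs) 5]
  -- h s1 - h s0 = α * (s1 - s0)
  have hlin : h s1 - h s0 = α * (s1 - s0) := by
    have hdiff : DifferentiableOn ℝ (fun t => h t - α * t) I :=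
      (hh.differentiableOn (by simp)).sub ((differentiable_id.const_mul α).differentiableOn)
    have hdz : ∀ s ∈ I, deriv (fun t => h t - α * t) s = 0 := by
      intro s hs
      have hhd : DifferentiableAt ℝ h s :=
        (hh.differentiableOn (by simp) s hs).differentiableAt (hIopen.mem_nhds hs)
      have hd2 : deriv (fun t : ℝ => α * t) s = α := by
        simpa using ((hasDerivAt_id s).const_mul α).deriv
      rw [deriv_fun_sub hhd (by fun_prop), hd2, hconsth' s hs, sub_self]
    have := my_const_of_deriv_zero hdiff hdz hs1 hs0
    linarith [this]
  -- conclude c = 0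
  have hc0 : c = 0 := by
    have e1 := hkey s1 hs1
    have e0 := hkey s0 hs0
    have : c * α * (h s1 - h s0) = 0 := by linarith
    rw [hlin] at this
    have hs01' : s1 - s0 ≠ 0 := sub_ne_zero.mpr (Ne.symm hs01)
    rcases mul_eq_zero.mp this with h1 | h2
    · rcases mul_eq_zero.mp h1 with h3 | h4
      · exact h3
      · exact absurd h4 hαne
    · rcases mul_eq_zero.mp h2 with h3 | h4
      · exact absurd h3 hαne
      · exact absurd h4 hs01'
  have hk : k = α ^ 2 := by
    have := hkey s0 hs0
    rw [hc0] at this; linarith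
  refine ⟨fun s hs => by rw [hconstf' s hs, hc0], ?_⟩
  rw [hk]; positivity
end

section
/- Let a, b, f : I → ℝ be smooth on an open interval with a + b = 0 identically, a' − b' = b² − a², and a − b nowhere zero. Suppose the soliton equations f'' = 3a' + 3a² + λ, f'·a = a' + a² + 2ab + λ, and f'·b = b' + 2b² + ab − k/h² + λ hold, where h satisfies h'/h = b and λ, k are constants. Then one derives a contradiction; i.e., no such configuration exists. -/
/-- Lemma 5.4: for the warped soliton metric, the condition a + b ≡ 0 leads to a
contradiction. -/
theorem stmt_4 (A B lam k : ℝ) (hAB : A < B) (p h f a b : ℝ → ℝ)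
    (hp : ContDiffOn ℝ (⊤ : ℕ∞) p (Set.Ioo A B)) (hh : ContDiffOn ℝ (⊤ : ℕ∞) h (Set.Ioo A B))
    (hf : ContDiffOn ℝ (⊤ : ℕ∞) f (Set.Ioo A B))
    (ha : DifferentiableOn ℝ a (Set.Ioo A B)) (hb : DifferentiableOn ℝ b (Set.Ioo A B))
    (hppos : ∀ s ∈ Set.Ioo A B, 0 < p s) (hhpos : ∀ s ∈ Set.Ioo A B, 0 < h s)
    (hadef : ∀ s ∈ Set.Ioo A B, a s = deriv p s / p s)
    (hbdef : ∀ s ∈ Set.Ioo A B, b s = deriv h s / h s)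
    (hab0 : ∀ s ∈ Set.Ioo A B, a s + b s = 0)
    (hode : ∀ s ∈ Set.Ioo A B, deriv a s - deriv b s = (b s) ^ 2 - (a s) ^ 2)
    (habne : ∀ s ∈ Set.Ioo A B, a s - b s ≠ 0)
    (heq1 : ∀ s ∈ Set.Ioo A B,
      deriv (deriv f) s = 3 * deriv a s + 3 * (a s) ^ 2 + lam)
    (heq2 : ∀ s ∈ Set.Ioo A B,
      deriv f s * a s = deriv a s + (a s) ^ 2 + 2 * a s * b s + lam)
    (heq3 : ∀ s ∈ Set.Ioo A B, deriv f s * b s =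
      deriv b s + 2 * (b s) ^ 2 + a s * b s - k / (h s) ^ 2 + lam) :
    False := by
  have hO : IsOpen (Set.Ioo A B) := isOpen_Ioo
  -- b = -a on the interval
  have hbeq : ∀ x ∈ Set.Ioo A B, b x = -a x := fun x hx => by
    have := hab0 x hx; linarith
  -- a' = 0 and b' = 0 on the interval
  have hda : ∀ x ∈ Set.Ioo A B, deriv a x = 0 ∧ deriv b x = 0 := by
    intro x hx
    have hxn : Set.Ioo A B ∈ nhds x := hO.mem_nhds hx
    have hA : DifferentiableAt ℝ a x := (ha x hx).differentiableAt hxn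
    have hB : DifferentiableAt ℝ b x := (hb x hx).differentiableAt hxn
    have hE : (fun y => a y + b y) =ᶠ[nhds x] (fun _ => (0:ℝ)) :=
      Filter.eventuallyEq_of_mem hxn (fun y hy => hab0 y hy)
    have hsum : deriv a x + deriv b x = 0 := by
      have h1 := hE.deriv_eq
      rw [deriv_fun_add hA hB, deriv_const] at h1
      exact h1
    have h2 := hode x hx
    rw [hbeq x hx] at h2
    constructor <;> nlinarith [h2, hsum]
  -- f' a = lam - a^2 on the interval
  have hfa : ∀ x ∈ Set.Ioo A B, deriv f x * a x = lam - (a x) ^ 2 := by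
    intro x hx
    have h2 := heq2 x hx
    rw [(hda x hx).1, hbeq x hx] at h2
    nlinarith [h2]
  -- k = 2 lam h^2 on the interval
  have hkh : ∀ x ∈ Set.Ioo A B, k = 2 * lam * (h x) ^ 2 := by
    intro x hx
    have h2 := heq2 x hx
    have h3 := heq3 x hx
    have hbx := hbeq x hx
    have hd := hda x hx
    have hhx := hhpos x hx
    rw [hd.1, hbx] at h2
    rw [hd.2, hbx] at h3
    have hne : (h x) ^ 2 ≠ 0 := by positivity
    field_simp at h3
    nlinarith [h2, h3]
  -- work at the midpoint
  set s : ℝ := (A + B) / 2 with hsdef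
  have hs : s ∈ Set.Ioo A B := by constructor <;> (simp only [hsdef]; linarith)
  have hsn : Set.Ioo A B ∈ nhds s := hO.mem_nhds hs
  have hA : DifferentiableAt ℝ a s := (ha s hs).differentiableAt hsn
  have hAd : HasDerivAt a 0 s := by
    have := hA.hasDerivAt
    rwa [(hda s hs).1] at this
  -- a s ≠ 0
  have hane : a s ≠ 0 := by
    have := habne s hs
    rw [hbeq s hs] at this
    intro h0; apply this; rw [h0]; ring
  -- f' is differentiable
  have hf' : ContDiffOn ℝ (⊤ : ℕ∞) (deriv f) (Set.Ioo A B) := hf.deriv_of_isOpen hO (by simp)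
  have hF : DifferentiableAt ℝ (deriv f) s :=
    ((hf'.differentiableOn (by simp)) s hs).differentiableAt hsn
  have hFd : HasDerivAt (deriv f) (deriv (deriv f) s) s := hF.hasDerivAt
  -- differentiate f' a = lam - a^2 at s
  have hL : HasDerivAt (fun x => deriv f x * a x)
      (deriv (deriv f) s * a s + deriv f s * 0) s := hFd.mul hAd
  have hR : HasDerivAt (fun x => lam - (a x) ^ 2)
      (0 - (2 : ℕ) * a s ^ (2 - 1) * 0) s := (hasDerivAt_const s lam).sub (hAd.pow 2)
  have hE : (fun x => deriv f x * a x) =ᶠ[nhds s] (fun x => lam - (a x) ^ 2) :=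
    Filter.eventuallyEq_of_mem hsn (fun y hy => hfa y hy)
  have hL' : HasDerivAt (fun x => deriv f x * a x)
      (0 - (2 : ℕ) * a s ^ (2 - 1) * 0) s := hR.congr_of_eventuallyEq hE
  have hff : deriv (deriv f) s * a s = 0 := by
    have := hL.unique hL'
    nlinarith [this]
  have hf''0 : deriv (deriv f) s = 0 := by
    rcases mul_eq_zero.mp hff with h0 | h0
    · exact h0
    · exact absurd h0 hane
  -- lam = -3 a^2
  have hlam : lam = -3 * (a s) ^ 2 := by
    have h1 := heq1 s hs
    rw [hf''0, (hda s hs).1] at h1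
    linarith
  -- differentiate k = 2 lam h^2 at s
  have hHdiff : DifferentiableAt ℝ h s :=
    ((hh.differentiableOn (by simp)) s hs).differentiableAt hsn
  have hhs : 0 < h s := hhpos s hs
  have hderivh : deriv h s = b s * h s := by
    have := hbdef s hs
    field_simp at this
    linarith [this]
  have hHd : HasDerivAt h (b s * h s) s := by
    have := hHdiff.hasDerivAt
    rwa [hderivh] at this
  have hRk : HasDerivAt (fun x => 2 * lam * (h x) ^ 2)
      (2 * lam * ((2 : ℕ) * h s ^ (2 - 1) * (b s * h s))) s :=
    (hHd.pow 2).const_mul (2 * lam)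
  have hEk : (fun _ => k) =ᶠ[nhds s] (fun x => 2 * lam * (h x) ^ 2) :=
    Filter.eventuallyEq_of_mem hsn (fun y hy => hkh y hy)
  have hLk : HasDerivAt (fun _ : ℝ => k)
      (2 * lam * ((2 : ℕ) * h s ^ (2 - 1) * (b s * h s))) s :=
    hRk.congr_of_eventuallyEq hEk
  have hzero : 2 * lam * ((2 : ℕ) * h s ^ (2 - 1) * (b s * h s)) = 0 :=
    ((hasDerivAt_const s k).unique hLk).symm
  rw [hbeq s hs, hlam] at hzero
  have h2 : (h s) ^ 2 ≠ 0 := by positivity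
  have hzero' : a s ^ 3 * h s ^ 2 = 0 := by
    push_cast at hzero
    linear_combination hzero / 12
  have ha3 : a s ^ 3 = 0 := by
    rcases mul_eq_zero.mp hzero' with h0 | h0
    · exact h0
    · exact absurd h0 h2
  exact hane ((pow_eq_zero_iff three_ne_zero).mp ha3)
end

section
/- Let a, b : I → ℝ be differentiable on an open interval, λ, k real constants, h a positive differentiable function with h'/h = b, and suppose: (i) a − b is nowhere zero; (ii) b' = a' + a² − b²; (iii) 2ab − b² + λ = (k/h²)·((a+b)/(a−b)) in the precise form (a−b)(2ab − b² + λ) = (a+b)·k/h²; (iv) the relations −a'(a²+b²−ab−λ) = (a²−b²)(a²−2ab−λ) and −(a+b)a' = a³ + 2ab² + λb hold. If k ≠ 0 and a + b is nowhere zero, then b·(λ + 3ab)·(λ − 2a² + ab) = 0 at every point of I. -/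
/-- Lemma 6.1: eliminating a' from the two polynomial ODE relations yields the
factorized identity b(λ + 3ab)(λ − 2a² + ab) = 0 when k ≠ 0. -/
theorem stmt_5 (A B lam k : ℝ) (a b h : ℝ → ℝ)
    (ha : DifferentiableOn ℝ a (Set.Ioo A B)) (hb : DifferentiableOn ℝ b (Set.Ioo A B))
    (hhdiff : DifferentiableOn ℝ h (Set.Ioo A B))
    (hhpos : ∀ s ∈ Set.Ioo A B, 0 < h s)
    (hbdef : ∀ s ∈ Set.Ioo A B, deriv h s / h s = b s)
    (h1 : ∀ s ∈ Set.Ioo A B, a s - b s ≠ 0)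
    (h2 : ∀ s ∈ Set.Ioo A B, deriv b s = deriv a s + (a s) ^ 2 - (b s) ^ 2)
    (h3 : ∀ s ∈ Set.Ioo A B,
      (a s - b s) * (2 * a s * b s - (b s) ^ 2 + lam) = (a s + b s) * (k / (h s) ^ 2))
    (h4 : ∀ s ∈ Set.Ioo A B,
      - deriv a s * ((a s) ^ 2 + (b s) ^ 2 - a s * b s - lam) =
        ((a s) ^ 2 - (b s) ^ 2) * ((a s) ^ 2 - 2 * a s * b s - lam))
    (h5 : ∀ s ∈ Set.Ioo A B,
      - (a s + b s) * deriv a s = (a s) ^ 3 + 2 * a s * (b s) ^ 2 + lam * b s)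
    (hk : k ≠ 0) (hab : ∀ s ∈ Set.Ioo A B, a s + b s ≠ 0) :
    ∀ s ∈ Set.Ioo A B,
      b s * (lam + 3 * a s * b s) * (lam - 2 * (a s) ^ 2 + a s * b s) = 0 := by
  intro s hs
  have H4 := h4 s hs
  have H5 := h5 s hs
  linear_combination ((a s) ^ 2 + (b s) ^ 2 - a s * b s - lam) * H5 -
    (a s + b s) * H4
end

section
/- On the open set {(s,t,x₃,x₄) ∈ ℝ⁴ : s > 0} with the Riemannian metric g = ds² + s^{2/3} dt² + s^{4/3}(dx₃² + dx₄²), and with f(s) = (2/3)·ln s, the pair (g, f) is a steady gradient Ricci soliton: ∇df = −Rc. Moreover the Ricci curvature in the orthonormal frame E₁ = ∂ₛ, E₂ = s^{−1/3}∂ₜ, E₃ = s^{−2/3}∂₃, E₄ = s^{−2/3}∂₄ satisfies R₁₁ = 2/(3s²), R₂₂ = −2/(9s²), R₃₃ = R₄₄ = −4/(9s²), R_{ij} = 0 for i ≠ j, and the scalar curvature is R = −4/(9s²). -/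
/-- Partial derivative in the i-th coordinate direction on ℝ⁴. -/
noncomputable def pd (i : Fin 4) (F : (Fin 4 → ℝ) → ℝ) (x : Fin 4 → ℝ) : ℝ :=
  fderiv ℝ F x (Pi.single i 1)

/-- Christoffel symbols Γ^k_{ij} of a metric on ℝ⁴. -/
noncomputable def christoffel (g : (Fin 4 → ℝ) → Matrix (Fin 4) (Fin 4) ℝ)
    (k i j : Fin 4) (x : Fin 4 → ℝ) : ℝ :=
  (1 / 2) * ∑ l : Fin 4, (g x)⁻¹ k l *
    (pd i (fun y => g y l j) x + pd j (fun y => g y l i) x - pd l (fun y => g y i j) x)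

/-- Curvature tensor R_{ijkl} = ⟨∇_i∇_j ∂_k − ∇_j∇_i ∂_k, ∂_l⟩. -/
noncomputable def riem (g : (Fin 4 → ℝ) → Matrix (Fin 4) (Fin 4) ℝ)
    (i j k l : Fin 4) (x : Fin 4 → ℝ) : ℝ :=
  ∑ m : Fin 4, g x l m *
    (pd i (christoffel g m j k) x - pd j (christoffel g m i k) x
      + ∑ n : Fin 4, (christoffel g m i n x * christoffel g n j k x
        - christoffel g m j n x * christoffel g n i k x))

/-- Ricci tensor Ric_{jk} = g^{im} R_{ijkm}. -/
noncomputable def ricci (g : (Fin 4 → ℝ) → Matrix (Fin 4) (Fin 4) ℝ)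
    (j k : Fin 4) (x : Fin 4 → ℝ) : ℝ :=
  ∑ i : Fin 4, ∑ m : Fin 4, (g x)⁻¹ i m * riem g i j k m x

/-- Scalar curvature. -/
noncomputable def scal (g : (Fin 4 → ℝ) → Matrix (Fin 4) (Fin 4) ℝ)
    (x : Fin 4 → ℝ) : ℝ :=
  ∑ j : Fin 4, ∑ k : Fin 4, (g x)⁻¹ j k * ricci g j k x

/-- Hessian ∇df of a function with respect to a metric on ℝ⁴. -/
noncomputable def hess (g : (Fin 4 → ℝ) → Matrix (Fin 4) (Fin 4) ℝ)
    (f : (Fin 4 → ℝ) → ℝ) (i j : Fin 4) (x : Fin 4 → ℝ) : ℝ :=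
  pd i (pd j f) x - ∑ k : Fin 4, christoffel g k i j x * pd k f x

/-- The metric g = ds² + s^{2/3} dt² + s^{4/3}(dx₃² + dx₄²) on {s > 0}. -/
noncomputable def g9 : (Fin 4 → ℝ) → Matrix (Fin 4) (Fin 4) ℝ := fun x =>
  Matrix.diagonal ![1, (x 0) ^ ((2 : ℝ) / 3), (x 0) ^ ((4 : ℝ) / 3), (x 0) ^ ((4 : ℝ) / 3)]

/-- The potential f(s) = (2/3)·ln s. -/
noncomputable def f9 : (Fin 4 → ℝ) → ℝ := fun x => (2 / 3) * Real.log (x 0)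

/-!
The metric has the power form ds² + Σᵢ s^{eᵢ} dxᵢ² with e = (0, 2/3, 4/3, 4/3), whose
Christoffel symbols are constant multiples of s⁻¹ and s^{eᵢ - 1}. For arbitrary exponents with
e₀ = 0 and σ = Σᵢ eᵢ, the Ricci tensor is diagonal with R₀₀ = (2σ - Σᵢ eᵢ²)/(4s²) and
R_jj = -e_j (σ - 2) s^{e_j}/(4s²), while the Hessian of c·log s is diagonal with entries -c/s²
and c e_j s^{e_j}/(2s²). So c·log s is a steady soliton potential as soon as Σᵢ eᵢ² = 4 and
2c = σ - 2, which for the exponents above gives c = 2/3.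
-/

open Filter Topology

theorem pd_congr_of_eventuallyEq {F G : (Fin 4 → ℝ) → ℝ} {x : Fin 4 → ℝ} (h : F =ᶠ[𝓝 x] G)
    (i : Fin 4) : pd i F x = pd i G x := by
  rw [pd, pd, h.fderiv_eq]

theorem eventually_apply_zero_pos {x : Fin 4 → ℝ} (hx : 0 < x 0) : ∀ᶠ y in 𝓝 x, 0 < y 0 :=
  continuousAt_const.eventually_lt (continuous_apply (0 : Fin 4)).continuousAt hx

theorem pd_comp_apply_zero {φ : ℝ → ℝ} {φ' : ℝ} {x : Fin 4 → ℝ} (h : HasDerivAt φ φ' (x 0))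
    (i : Fin 4) : pd i (fun y => φ (y 0)) x = if i = 0 then φ' else 0 := by
  have hF : HasFDerivAt (fun y : Fin 4 → ℝ => φ (y 0)) _ x :=
    h.comp_hasFDerivAt x (hasFDerivAt_apply (𝕜 := ℝ) (0 : Fin 4) x)
  rw [pd, hF.fderiv]
  by_cases hi : i = 0 <;> simp [hi, eq_comm]

-- `riem g i j k l = ∑ m, g x l m * riemUp g m i j k x`
noncomputable def riemUp (g : (Fin 4 → ℝ) → Matrix (Fin 4) (Fin 4) ℝ) (m i j k : Fin 4)
    (x : Fin 4 → ℝ) : ℝ :=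
  pd i (christoffel g m j k) x - pd j (christoffel g m i k) x
    + ∑ n : Fin 4, (christoffel g m i n x * christoffel g n j k x
      - christoffel g m j n x * christoffel g n i k x)

theorem ricci_eq_sum_riemUp {g : (Fin 4 → ℝ) → Matrix (Fin 4) (Fin 4) ℝ} {x : Fin 4 → ℝ}
    (h : IsUnit (g x).det) (j k : Fin 4) : ricci g j k x = ∑ i, riemUp g i i j k x := by
  calc ricci g j k x = ∑ i, ∑ m, ((g x)⁻¹ * g x) i m * riemUp g m i j k x := by
        simp only [ricci, riem, Matrix.mul_apply, Finset.mul_sum, Finset.sum_mul, mul_assoc]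
        exact Finset.sum_congr rfl fun i _ => Finset.sum_comm
    _ = ∑ i, riemUp g i i j k x := by simp [Matrix.nonsing_inv_mul _ h, Matrix.one_apply]

noncomputable def powerMetric (e : Fin 4 → ℝ) (x : Fin 4 → ℝ) : Matrix (Fin 4) (Fin 4) ℝ :=
  Matrix.diagonal fun i => x 0 ^ e i

noncomputable def powerChristoffel (e : Fin 4 → ℝ) (k i j : Fin 4) (s : ℝ) : ℝ :=
  e k / 2 * ((if i = 0 ∧ k = j then 1 else 0) + (if j = 0 ∧ k = i then 1 else 0)) * s ^ (-1 : ℝ)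
    - (if k = 0 ∧ i = j then e i / 2 else 0) * s ^ (e i - 1)

section PowerMetric

variable {e : Fin 4 → ℝ} {x : Fin 4 → ℝ}

theorem powerMetric_inv (hx : 0 < x 0) : (powerMetric e x)⁻¹ = powerMetric (-e) x := by
  refine Matrix.inv_eq_left_inv ?_
  rw [powerMetric, powerMetric, Matrix.diagonal_mul_diagonal, ← Matrix.diagonal_one]
  congr 1
  ext i
  simp [← Real.rpow_add hx]

theorem isUnit_det_powerMetric (hx : 0 < x 0) : IsUnit (powerMetric e x).det := by
  rw [isUnit_iff_ne_zero, powerMetric, Matrix.det_diagonal]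
  exact Finset.prod_ne_zero_iff.mpr fun i _ => (Real.rpow_pos_of_pos hx _).ne'

theorem pd_powerMetric (hx : 0 < x 0) (i l j : Fin 4) :
    pd i (fun y => powerMetric e y l j) x =
      if i = 0 ∧ l = j then e l * x 0 ^ (e l - 1) else 0 := by
  by_cases hlj : l = j
  · subst hlj
    simp only [powerMetric, Matrix.diagonal_apply_eq]
    rw [pd_comp_apply_zero (Real.hasDerivAt_rpow_const (Or.inl hx.ne'))]
    simp
  · simp [powerMetric, pd, hlj]

theorem christoffel_powerMetric (he : e 0 = 0) (hx : 0 < x 0) (k i j : Fin 4) :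
    christoffel (powerMetric e) k i j x = powerChristoffel e k i j (x 0) := by
  simp only [christoffel, powerMetric_inv hx, pd_powerMetric hx]
  simp [powerMetric, Matrix.diagonal_apply, powerChristoffel]
  by_cases hk : k = 0
  · subst hk
    simp only [he, neg_zero, Real.rpow_zero, zero_mul, ite_self, zero_div]
    split_ifs <;> ring
  · have key : x 0 ^ (-e k) * x 0 ^ (e k - 1) = x 0 ^ (-1 : ℝ) := by
      rw [← Real.rpow_add hx]; ring_nf
    simp only [hk, false_and, if_false, sub_zero, ← key]
    split_ifs <;> ring

theorem hasDerivAt_powerChristoffel {s : ℝ} (hs : 0 < s) (k i j : Fin 4) :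
    HasDerivAt (powerChristoffel e k i j)
      (e k / 2 * ((if i = 0 ∧ k = j then 1 else 0) + (if j = 0 ∧ k = i then 1 else 0)) *
          (-1 * s ^ ((-1 : ℝ) - 1))
        - (if k = 0 ∧ i = j then e i / 2 else 0) * ((e i - 1) * s ^ (e i - 1 - 1))) s :=
  ((Real.hasDerivAt_rpow_const (Or.inl hs.ne')).const_mul _).sub
    ((Real.hasDerivAt_rpow_const (Or.inl hs.ne')).const_mul _)

theorem pd_christoffel_powerMetric (he : e 0 = 0) (hx : 0 < x 0) (l k i j : Fin 4) :
    pd l (christoffel (powerMetric e) k i j) x =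
      if l = 0 then deriv (powerChristoffel e k i j) (x 0) else 0 := by
  rw [pd_congr_of_eventuallyEq ((eventually_apply_zero_pos hx).mono fun y hy =>
      christoffel_powerMetric he hy k i j) l,
    pd_comp_apply_zero (hasDerivAt_powerChristoffel hx k i j).differentiableAt.hasDerivAt]

theorem ricci_powerMetric (he : e 0 = 0) (hx : 0 < x 0) (j k : Fin 4) :
    ricci (powerMetric e) j k x =
      if j = k then
        (if j = 0 then (2 * ∑ i, e i - ∑ i, e i ^ 2) / 4
          else -(e j * (∑ i, e i - 2) / 4) * x 0 ^ e j) / x 0 ^ 2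
      else 0 := by
  rw [ricci_eq_sum_riemUp (isUnit_det_powerMetric hx)]
  simp only [riemUp, pd_christoffel_powerMetric he hx, christoffel_powerMetric he hx,
    (hasDerivAt_powerChristoffel hx _ _ _).deriv, powerChristoffel,
    Real.rpow_sub_one hx.ne', Real.rpow_neg_one]
  fin_cases j <;> fin_cases k <;> simp [Fin.sum_univ_four, he]
  all_goals field_simp
  all_goals ring

theorem ricci_powerMetric_div_self (he : e 0 = 0) (hx : 0 < x 0) {j : Fin 4} (hj : j ≠ 0) :
    ricci (powerMetric e) j j x / x 0 ^ e j = -(e j * (∑ i, e i - 2)) / (4 * x 0 ^ 2) := by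
  rw [ricci_powerMetric he hx, if_pos rfl, if_neg hj]
  have := (Real.rpow_pos_of_pos hx (e j)).ne'
  field_simp

theorem scal_powerMetric (he : e 0 = 0) (hx : 0 < x 0) :
    scal (powerMetric e) x = (4 * ∑ i, e i - (∑ i, e i) ^ 2 - ∑ i, e i ^ 2) / (4 * x 0 ^ 2) := by
  simp only [scal, ricci_powerMetric he hx, powerMetric_inv hx, Fin.sum_univ_four]
  simp [powerMetric, he, Real.rpow_neg hx.le]
  have := fun i => (Real.rpow_pos_of_pos hx (e i)).ne'
  field_simp
  ring

theorem pd_const_mul_log (hx : 0 < x 0) (c : ℝ) (j : Fin 4) :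
    pd j (fun y => c * Real.log (y 0)) x = (if j = 0 then c else 0) * x 0 ^ (-1 : ℝ) := by
  rw [pd_comp_apply_zero ((Real.hasDerivAt_log hx.ne').const_mul c), Real.rpow_neg_one]
  split_ifs <;> simp

theorem hess_powerMetric_const_mul_log (he : e 0 = 0) (hx : 0 < x 0) (c : ℝ) (i j : Fin 4) :
    hess (powerMetric e) (fun y => c * Real.log (y 0)) i j x =
      if i = j then c * ((if i = 0 then -1 else 0) + e i / 2 * x 0 ^ e i) / x 0 ^ 2 else 0 := by
  have hpd : ∀ᶠ y in 𝓝 x, pd j (fun y => c * Real.log (y 0)) y =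
      (if j = 0 then c else 0) * y 0 ^ (-1 : ℝ) :=
    (eventually_apply_zero_pos hx).mono fun y hy => pd_const_mul_log hy c j
  rw [hess, pd_congr_of_eventuallyEq hpd,
    pd_comp_apply_zero ((Real.hasDerivAt_rpow_const (Or.inl hx.ne')).const_mul _)]
  simp only [christoffel_powerMetric he hx, pd_const_mul_log hx, powerChristoffel,
    Real.rpow_sub_one hx.ne', Real.rpow_neg_one]
  fin_cases i <;> fin_cases j <;> simp [he]
  all_goals field_simp

theorem hess_powerMetric_const_mul_log_eq_neg_ricci (he : e 0 = 0) (hsq : ∑ i, e i ^ 2 = 4)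
    {c : ℝ} (hc : 2 * c = ∑ i, e i - 2) (hx : 0 < x 0) (i j : Fin 4) :
    hess (powerMetric e) (fun y => c * Real.log (y 0)) i j x = -ricci (powerMetric e) i j x := by
  rw [hess_powerMetric_const_mul_log he hx, ricci_powerMetric he hx]
  split_ifs with hij hi
  · subst hi
    simp only [he]
    linear_combination (-1 / (2 * x 0 ^ 2)) * hc - (1 / (4 * x 0 ^ 2)) * hsq
  · linear_combination (e i * x 0 ^ e i / (4 * x 0 ^ 2)) * hc
  · simp

end PowerMetric

theorem g9_eq_powerMetric : g9 = powerMetric ![0, 2 / 3, 4 / 3, 4 / 3] := by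
  funext x
  simp only [g9, powerMetric]
  congr 1
  funext i
  fin_cases i <;> simp

/-- Lemma 6.4 / Theorem 1.1(iii): (g₉, f₉) is a steady gradient Ricci soliton
(∇df = −Rc), with Ricci curvature in the orthonormal frame
E₁ = ∂ₛ, E₂ = s^{−1/3}∂ₜ, E₃ = E₄ = s^{−2/3}∂ᵢ given by R₁₁ = 2/(3s²),
R₂₂ = −2/(9s²), R₃₃ = R₄₄ = −4/(9s²), R_{ij} = 0 for i ≠ j, and scalar
curvature R = −4/(9s²). -/
theorem stmt_9 :
    ∀ x : Fin 4 → ℝ, 0 < x 0 →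
      (∀ i j : Fin 4, hess g9 f9 i j x = - ricci g9 i j x) ∧
      ricci g9 0 0 x = 2 / (3 * (x 0) ^ 2) ∧
      ricci g9 1 1 x / ((x 0) ^ ((2 : ℝ) / 3)) = -2 / (9 * (x 0) ^ 2) ∧
      ricci g9 2 2 x / ((x 0) ^ ((4 : ℝ) / 3)) = -4 / (9 * (x 0) ^ 2) ∧
      ricci g9 3 3 x / ((x 0) ^ ((4 : ℝ) / 3)) = -4 / (9 * (x 0) ^ 2) ∧
      (∀ i j : Fin 4, i ≠ j → ricci g9 i j x = 0) ∧
      scal g9 x = -4 / (9 * (x 0) ^ 2) := by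
  intro x hx
  have he : (![0, 2 / 3, 4 / 3, 4 / 3] : Fin 4 → ℝ) 0 = 0 := rfl
  have hsum : ∑ i, (![0, 2 / 3, 4 / 3, 4 / 3] : Fin 4 → ℝ) i = 10 / 3 := by
    simp [Fin.sum_univ_four]; norm_num
  have hsq : ∑ i, (![0, 2 / 3, 4 / 3, 4 / 3] : Fin 4 → ℝ) i ^ 2 = 4 := by
    simp [Fin.sum_univ_four]; norm_num
  rw [g9_eq_powerMetric]
  refine ⟨hess_powerMetric_const_mul_log_eq_neg_ricci he hsq (by rw [hsum]; norm_num) hx,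
    ?_, ?_, ?_, ?_, fun i j hij => by rw [ricci_powerMetric he hx, if_neg hij], ?_⟩
  · rw [ricci_powerMetric he hx, if_pos rfl, if_pos rfl, hsum, hsq]
    ring
  · refine (ricci_powerMetric_div_self he hx (j := 1) (by decide)).trans ?_
    simp [hsum]
    ring
  · refine (ricci_powerMetric_div_self he hx (j := 2) (by decide)).trans ?_
    simp [hsum]
    ring
  · refine (ricci_powerMetric_div_self he hx (j := 3) (by decide)).trans ?_
    simp [hsum]
    ring
  · rw [scal_powerMetric he hx, hsum, hsq]
    ring
end

section
/- Let h, f : I → ℝ be smooth on an open interval with h > 0, and constants λ, k. Suppose f'' − 3h''/h = λ, (h'/h)f' + 2k/h² − h''/h − 2(h')²/h² = λ, and additionally f'f'' = λf' (from constancy of scalar curvature) with f' nowhere zero. Then h'' = 0 on I, so h(s) = a or h(s) = b·s (after translating s) for constants a, b ≠ 0. -/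
/-- Computation in Corollary 8.3: for warped-product gradient Ricci solitons with
harmonic curvature, f'' = λ combined with f'' − 3h''/h = λ forces h'' = 0, so h is
affine. -/
theorem stmt_11 (A B lam k : ℝ) (hAB : A < B) (h f : ℝ → ℝ)
    (hh : ContDiffOn ℝ (⊤ : ℕ∞) h (Set.Ioo A B)) (hf : ContDiffOn ℝ (⊤ : ℕ∞) f (Set.Ioo A B))
    (hpos : ∀ s ∈ Set.Ioo A B, 0 < h s)
    (e1 : ∀ s ∈ Set.Ioo A B, deriv (deriv f) s - 3 * deriv (deriv h) s / h s = lam)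
    (e2 : ∀ s ∈ Set.Ioo A B, (deriv h s / h s) * deriv f s + 2 * k / (h s) ^ 2
        - deriv (deriv h) s / h s - 2 * (deriv h s) ^ 2 / (h s) ^ 2 = lam)
    (e3 : ∀ s ∈ Set.Ioo A B, deriv f s * deriv (deriv f) s = lam * deriv f s)
    (hf0 : ∀ s ∈ Set.Ioo A B, deriv f s ≠ 0) :
    (∀ s ∈ Set.Ioo A B, deriv (deriv h) s = 0) ∧
      ∃ c d : ℝ, ∀ s ∈ Set.Ioo A B, h s = c * s + d := by
  have hO : IsOpen (Set.Ioo A B) := isOpen_Ioo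
  have hdd : ∀ s ∈ Set.Ioo A B, deriv (deriv h) s = 0 := by
    intro s hs
    have hf2 : deriv (deriv f) s = lam := by
      have h0 := hf0 s hs
      have h1 : deriv f s * (deriv (deriv f) s - lam) = 0 := by
        have := e3 s hs; ring_nf; linarith
      rcases mul_eq_zero.mp h1 with h2 | h2
      · exact absurd h2 h0
      · linarith
    have h1 := e1 s hs
    rw [hf2] at h1
    have hne := (hpos s hs).ne'
    have : 3 * deriv (deriv h) s / h s = 0 := by linarith
    field_simp at this
    linarith
  refine ⟨hdd, ?_⟩
  -- h' is constant on Ioo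
  obtain ⟨s₀, hs₀⟩ : ∃ s₀, s₀ ∈ Set.Ioo A B := ⟨(A + B) / 2, by constructor <;> linarith⟩
  have hconv : Convex ℝ (Set.Ioo A B) := convex_Ioo A B
  have hh1 : ContDiffOn ℝ (⊤ : ℕ∞) (deriv h) (Set.Ioo A B) :=
    hh.deriv_of_isOpen hO (by simp)
  have hdiff1 : DifferentiableOn ℝ (deriv h) (Set.Ioo A B) :=
    hh1.differentiableOn (by simp)
  have hdiff0 : DifferentiableOn ℝ h (Set.Ioo A B) := hh.differentiableOn (by simp)
  set c := deriv h s₀ with hc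
  have hderivh : ∀ s ∈ Set.Ioo A B, deriv h s = c := by
    intro s hs
    refine (hconv.is_const_of_fderivWithin_eq_zero hdiff1 ?_ hs hs₀)
    intro x hx
    have : fderivWithin ℝ (deriv h) (Set.Ioo A B) x = fderiv ℝ (deriv h) x :=
      fderivWithin_of_isOpen hO hx
    have hdx : DifferentiableAt ℝ (deriv h) x :=
      (hdiff1.differentiableAt (hO.mem_nhds hx))
    rw [this, hdx.hasDerivAt.hasFDerivAt.fderiv, hdd x hx]
    ext y
    simp
  refine ⟨c, h s₀ - c * s₀, ?_⟩
  intro s hs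
  have key : h s - c * s = h s₀ - c * s₀ := by
    have : ∀ x ∈ Set.Ioo A B, fderivWithin ℝ (fun x => h x - c * x) (Set.Ioo A B) x = 0 := by
      intro x hx
      have hdx : DifferentiableAt ℝ h x := hdiff0.differentiableAt (hO.mem_nhds hx)
      have hcx : HasDerivAt (fun y : ℝ => c * y) c x := by
        simpa using (hasDerivAt_id x).const_mul c
      have hD : HasDerivAt (fun x => h x - c * x) (deriv h x - c) x :=
        (hdx.hasDerivAt).sub hcx
      rw [hderivh x hx, sub_self] at hD
      rw [fderivWithin_of_isOpen hO hx, hD.hasFDerivAt.fderiv]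
      ext y
      simp
    exact hconv.is_const_of_fderivWithin_eq_zero
      (fun x hx => ((hdiff0 x hx).sub (((differentiable_id.const_mul c).differentiableOn) x hx)))
      this hs hs₀
  linarith
end
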